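/- arXiv:1712.08050 — 2 statements merged into one kernel-verified Lean document; each statement's English description precedes it below -/
import Mathlib

section
/- Let F = {f_n} be a J-orthogonal Schauder basis of (H, (·,·)) that is a J-frame, and let f ∈ H. Then f belongs to the energetic linear manifold 𝔇 = H ∩ Ĥ if and only if the sequence {[f, f_n]}_{n∈ℕ} belongs to l²(ℕ). -/
noncomputable section
open Filter Topology

namespace KreinStmt

local notation "⟪" x ", " y "⟫" => @inner ℂ _ _ x y

variable {H : Type} [NormedAddCommGroup H] [InnerProductSpace ℂ H] [CompleteSpace H]

/-- The indefinite inner product `[f,g]` of the Krein space with fundamental symmetry `J`. -/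
def indef (J : H →L[ℂ] H) (f g : H) : ℂ := ⟪J f, g⟫

/-- `J` is a fundamental symmetry: a self-adjoint involution on the Hilbert space `H`. -/
def IsFundSym (J : H →L[ℂ] H) : Prop :=
  (∀ f g : H, ⟪J f, g⟫ = ⟪f, J g⟫) ∧ ∀ f : H, J (J f) = f

/-- `M` is a (closed) positive subspace of the Krein space. -/
def IsPos (J : H →L[ℂ] H) (M : Submodule ℂ H) : Prop :=
  IsClosed (M : Set H) ∧ ∀ f ∈ M, f ≠ 0 → 0 < (indef J f f).re

/-- `M` is a (closed) negative subspace of the Krein space. -/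
def IsNeg (J : H →L[ℂ] H) (M : Submodule ℂ H) : Prop :=
  IsClosed (M : Set H) ∧ ∀ f ∈ M, f ≠ 0 → (indef J f f).re < 0

/-- Maximal positive subspace. -/
def IsMaxPos (J : H →L[ℂ] H) (M : Submodule ℂ H) : Prop :=
  IsPos J M ∧ ∀ M' : Submodule ℂ H, IsPos J M' → M ≤ M' → M' = M

/-- Maximal negative subspace. -/
def IsMaxNeg (J : H →L[ℂ] H) (M : Submodule ℂ H) : Prop :=
  IsNeg J M ∧ ∀ M' : Submodule ℂ H, IsNeg J M' → M ≤ M' → M' = M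

/-- Uniformly positive subspace. -/
def IsUnifPos (J : H →L[ℂ] H) (M : Submodule ℂ H) : Prop :=
  IsClosed (M : Set H) ∧ ∃ α > (0:ℝ), ∀ f ∈ M, α * ‖f‖ ^ 2 ≤ (indef J f f).re

/-- Uniformly negative subspace. -/
def IsUnifNeg (J : H →L[ℂ] H) (M : Submodule ℂ H) : Prop :=
  IsClosed (M : Set H) ∧ ∃ α > (0:ℝ), ∀ f ∈ M, α * ‖f‖ ^ 2 ≤ -(indef J f f).re

/-- Maximal uniformly positive subspace. -/
def IsMaxUnifPos (J : H →L[ℂ] H) (M : Submodule ℂ H) : Prop :=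
  IsUnifPos J M ∧ ∀ M' : Submodule ℂ H, IsUnifPos J M' → M ≤ M' → M' = M

/-- Maximal uniformly negative subspace. -/
def IsMaxUnifNeg (J : H →L[ℂ] H) (M : Submodule ℂ H) : Prop :=
  IsUnifNeg J M ∧ ∀ M' : Submodule ℂ H, IsUnifNeg J M' → M ≤ M' → M' = M

/-- Two subspaces are `J`-orthogonal. -/
def JOrth (J : H →L[ℂ] H) (M N : Submodule ℂ H) : Prop :=
  ∀ f ∈ M, ∀ g ∈ N, indef J f g = 0

/-- Indices of nonnegative vectors of the family. -/
def Npos (J : H →L[ℂ] H) (F : ℕ → H) : Set ℕ := {n | 0 ≤ (indef J (F n) (F n)).re}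

/-- Indices of negative vectors of the family. -/
def Nneg (J : H →L[ℂ] H) (F : ℕ → H) : Set ℕ := {n | (indef J (F n) (F n)).re < 0}

/-- `M₊`: closed span of the nonnegative vectors of the family. -/
def Mpos (J : H →L[ℂ] H) (F : ℕ → H) : Submodule ℂ H :=
  (Submodule.span ℂ (F '' Npos J F)).topologicalClosure

/-- `M₋`: closed span of the negative vectors of the family. -/
def Mneg (J : H →L[ℂ] H) (F : ℕ → H) : Submodule ℂ H :=
  (Submodule.span ℂ (F '' Nneg J F)).topologicalClosure

/-- `J`-frame in the sense of Definition 3 of the paper, with frame bounds `A ≤ B`. -/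
def IsJFrame (J : H →L[ℂ] H) (F : ℕ → H) (A B : ℝ) : Prop :=
  0 < A ∧ A ≤ B ∧ IsMaxPos J (Mpos J F) ∧ IsMaxNeg J (Mneg J F) ∧
  (∀ f ∈ Submodule.span ℂ (F '' Npos J F),
    A * |(indef J f f).re| ≤ ∑' n : Npos J F, ‖indef J f (F ↑n)‖ ^ 2 ∧
    ∑' n : Npos J F, ‖indef J f (F ↑n)‖ ^ 2 ≤ B * |(indef J f f).re|) ∧
  (∀ f ∈ Submodule.span ℂ (F '' Nneg J F),
    A * |(indef J f f).re| ≤ ∑' n : Nneg J F, ‖indef J f (F ↑n)‖ ^ 2 ∧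
    ∑' n : Nneg J F, ‖indef J f (F ↑n)‖ ^ 2 ≤ B * |(indef J f f).re|)

/-!
By `J`-orthogonality everything reduces to coefficients: if `f = ∑ cₙ fₙ` then
`[f, fₙ] = c̄ₙ [fₙ, fₙ]`, and the `J`-frame inequalities applied to a single `fₙ` give
`A ≤ |[fₙ, fₙ]| ≤ B`. Splitting `x ∈ D` as `x₊ + x₋` yields the Bessel-type bound
`∑_{n ∈ S} |[x, fₙ]|² ≤ B (x, x)₁`, which survives the limit defining `𝔇` and bounds the
partial sums of `∑ |[f, fₙ]|²`. Conversely the partial sums `sₖ` of the expansion of `f` lie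
in `D`, and `‖sₖ - sⱼ‖₁² = ∑_{j ≤ n < k} |cₙ|² |[fₙ, fₙ]| ≤ A⁻¹ ∑_{j ≤ n < k} |[f, fₙ]|²`,
so they converge in `Ĥ`.
-/

section

omit [CompleteSpace H]

open Finset Submodule ComplexConjugate

theorem eq_of_sub_mem_of_inf_eq_bot {R M : Type*} [Ring R] [AddCommGroup M] [Module R M]
    {V W : Submodule R M} (h : V ⊓ W = ⊥) {x u v : M} (hu : u ∈ V) (hv : v ∈ V)
    (hxu : x - u ∈ W) (hxv : x - v ∈ W) : u = v := by
  have huv : u - v ∈ V ⊓ W := ⟨sub_mem hu hv, by simpa using sub_mem hxv hxu⟩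
  rwa [h, Submodule.mem_bot, sub_eq_zero] at huv

theorem cauchySeq_of_dist_sq_le {α : Type*} [PseudoMetricSpace α] {u : ℕ → α} {σ : ℕ → ℝ}
    {C : ℝ} (hσ : CauchySeq σ) (h : ∀ j k, j ≤ k → dist (u k) (u j) ^ 2 ≤ C * (σ k - σ j)) :
    CauchySeq u := by
  refine Metric.cauchySeq_iff'.2 fun ε hε => ?_
  obtain ⟨N, hN⟩ := Metric.cauchySeq_iff'.1 hσ (ε ^ 2 / (|C| + 1)) (by positivity)
  refine ⟨N, fun n hn => ?_⟩
  have hσn : (|C| + 1) * |σ n - σ N| < ε ^ 2 := by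
    rw [← Real.dist_eq, mul_comm, ← lt_div_iff₀ (by positivity)]
    exact hN n hn
  have hCσ : C * (σ n - σ N) ≤ |C| * |σ n - σ N| := by
    rw [← abs_mul]
    exact le_abs_self _
  have hsq : dist (u n) (u N) ^ 2 < ε ^ 2 := by
    nlinarith [h N n hn, abs_nonneg (σ n - σ N)]
  exact lt_of_pow_lt_pow_left₀ 2 hε.le hsq

variable {J : H →L[ℂ] H} {F : ℕ → H}

def IsJOrthogonal (J : H →L[ℂ] H) (F : ℕ → H) : Prop :=
  Pairwise fun n m => indef J (F n) (F m) = 0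

theorem continuous_indef {α : Type*} [TopologicalSpace α] (J : H →L[ℂ] H) {f g : α → H}
    (hf : Continuous f) (hg : Continuous g) : Continuous fun a => indef J (f a) (g a) :=
  (J.continuous.comp hf).inner hg

theorem indef_conj (hJ : IsFundSym J) (x y : H) : indef J x y = conj (indef J y x) := by
  rw [indef, indef, ← inner_conj_symm, hJ.1]

theorem norm_indef_self (hJ : IsFundSym J) (x : H) : ‖indef J x x‖ = |(indef J x x).re| :=
  (Complex.abs_re_eq_norm.2 (Complex.conj_eq_iff_im.1 (indef_conj hJ x x).symm)).symm

theorem indef_sum_smul_left (horth : IsJOrthogonal J F) (T : Finset ℕ) (a : ℕ → ℂ) (m : ℕ) :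
    indef J (∑ n ∈ T, a n • F n) (F m) =
      if m ∈ T then conj (a m) * indef J (F m) (F m) else 0 := by
  simp only [indef, map_sum, map_smul, sum_inner, inner_smul_left]
  split_ifs with hm
  · refine sum_eq_single_of_mem m hm fun n _ hnm => ?_
    rw [← indef, horth hnm, mul_zero]
  · exact sum_eq_zero fun n hn => by rw [← indef, horth (ne_of_mem_of_not_mem hn hm), mul_zero]

theorem re_indef_sum_smul_self (horth : IsJOrthogonal J F) (T : Finset ℕ) (a : ℕ → ℂ) :
    (indef J (∑ n ∈ T, a n • F n) (∑ n ∈ T, a n • F n)).re =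
      ∑ n ∈ T, ‖a n‖ ^ 2 * (indef J (F n) (F n)).re := by
  rw [indef, inner_sum, Complex.re_sum]
  refine sum_congr rfl fun n hn => ?_
  rw [inner_smul_right, ← indef, indef_sum_smul_left horth, if_pos hn, ← mul_assoc,
    Complex.mul_conj', ← Complex.ofReal_pow, Complex.re_ofReal_mul]

theorem norm_indef_sum_smul_left_sq (hJ : IsFundSym J) (horth : IsJOrthogonal J F)
    (T : Finset ℕ) (a : ℕ → ℂ) (m : ℕ) :
    ‖indef J (∑ n ∈ T, a n • F n) (F m)‖ ^ 2 =
      if m ∈ T then ‖a m‖ ^ 2 * (indef J (F m) (F m)).re ^ 2 else 0 := by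
  rw [indef_sum_smul_left horth]
  split_ifs
  · rw [norm_mul, RCLike.norm_conj, norm_indef_self hJ, mul_pow, sq_abs]
  · simp

theorem indef_eq_of_tendsto_sum (horth : IsJOrthogonal J F) {f : H} {c : ℕ → ℂ}
    (hc : Tendsto (fun N => ∑ n ∈ range N, c n • F n) atTop (𝓝 f)) (m : ℕ) :
    indef J f (F m) = conj (c m) * indef J (F m) (F m) := by
  refine tendsto_nhds_unique
    (((continuous_indef J continuous_id continuous_const).tendsto f).comp hc)
    (tendsto_const_nhds.congr' ?_)
  filter_upwards [eventually_gt_atTop m] with N hN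
  rw [Function.comp_apply, id, indef_sum_smul_left horth, if_pos (mem_range.2 hN)]

theorem ne_zero_of_existsUnique_expansion
    (hbasis : ∀ f : H, ∃! c : ℕ → ℂ, Tendsto (fun N => ∑ n ∈ range N, c n • F n) atTop (𝓝 f))
    (n : ℕ) : F n ≠ 0 := by
  intro hn
  have hzero : ∀ c : ℕ → ℂ, (∀ m, c m ≠ 0 → m = n) →
      Tendsto (fun N => ∑ m ∈ range N, c m • F m) atTop (𝓝 0) := by
    refine fun c hc => tendsto_const_nhds.congr fun N => (sum_eq_zero fun m _ => ?_).symm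
    by_cases hcm : c m = 0
    · rw [hcm, zero_smul]
    · rw [hc m hcm, hn, smul_zero]
  have hsingle := (hbasis 0).unique
    (hzero (Pi.single n 1) fun m => not_imp_comm.1 fun h => Pi.single_eq_of_ne h 1)
    (hzero 0 fun m hm => absurd rfl hm)
  simpa using congrFun hsingle n

theorem tsum_norm_indef_sq_single (hJ : IsFundSym J) (horth : IsJOrthogonal J F) {N : Set ℕ}
    {n : ℕ} (hn : n ∈ N) :
    ∑' m : N, ‖indef J (F n) (F m)‖ ^ 2 = (indef J (F n) (F n)).re ^ 2 := by
  rw [tsum_eq_single ⟨n, hn⟩ fun m hm => ?_, norm_indef_self hJ, sq_abs]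
  rw [horth fun h => hm (Subtype.ext h.symm), norm_zero, zero_pow two_ne_zero]

theorem IsJFrame.abs_re_indef_self_mem_Icc {A B : ℝ} (hF : IsJFrame J F A B) (hJ : IsFundSym J)
    (horth : IsJOrthogonal J F) (hF0 : ∀ n, F n ≠ 0) (n : ℕ) :
    |(indef J (F n) (F n)).re| ∈ Set.Icc A B := by
  obtain ⟨-, -, ⟨⟨-, hMpos⟩, -⟩, -, hframe_pos, hframe_neg⟩ := hF
  set r := (indef J (F n) (F n)).re
  obtain ⟨hr, hAr, hrB⟩ : r ≠ 0 ∧ A * |r| ≤ r ^ 2 ∧ r ^ 2 ≤ B * |r| := by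
    rcases le_or_gt 0 r with hn | hn
    · have hspan : F n ∈ span ℂ (F '' Npos J F) := subset_span ⟨n, hn, rfl⟩
      rw [← tsum_norm_indef_sq_single hJ horth (N := Npos J F) hn]
      exact ⟨(hMpos _ (le_topologicalClosure _ hspan) (hF0 n)).ne', hframe_pos _ hspan⟩
    · have hspan : F n ∈ span ℂ (F '' Nneg J F) := subset_span ⟨n, hn, rfl⟩
      rw [← tsum_norm_indef_sq_single hJ horth (N := Nneg J F) hn]
      exact ⟨hn.ne, hframe_neg _ hspan⟩
  have hr' : 0 < |r| := abs_pos.2 hr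
  rw [← sq_abs] at hAr hrB
  constructor <;> nlinarith

theorem notMem_Npos_iff {n : ℕ} : n ∉ Npos J F ↔ n ∈ Nneg J F := by
  simp [Npos, Nneg]

theorem mem_Mpos_of_mem_Npos {n : ℕ} (hn : n ∈ Npos J F) : F n ∈ Mpos J F :=
  le_topologicalClosure _ (subset_span ⟨n, hn, rfl⟩)

theorem mem_Mneg_of_mem_Nneg {n : ℕ} (hn : n ∈ Nneg J F) : F n ∈ Mneg J F :=
  le_topologicalClosure _ (subset_span ⟨n, hn, rfl⟩)

theorem sum_smul_mem_Mpos_sup_Mneg (T : Finset ℕ) (a : ℕ → ℂ) :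
    ∑ n ∈ T, a n • F n ∈ Mpos J F ⊔ Mneg J F :=
  sum_mem fun n _ => (le_or_gt 0 (indef J (F n) (F n)).re).elim
    (fun hn => mem_sup_left (smul_mem _ _ (mem_Mpos_of_mem_Npos hn)))
    (fun hn => mem_sup_right (smul_mem _ _ (mem_Mneg_of_mem_Nneg hn)))

theorem indef_eq_zero_of_mem_closure_span (hJ : IsFundSym J) (horth : IsJOrthogonal J F)
    {N : Set ℕ} {n : ℕ} (hn : n ∉ N) {x : H}
    (hx : x ∈ (span ℂ (F '' N)).topologicalClosure) : indef J x (F n) = 0 := by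
  suffices hker : x ∈ LinearMap.ker (innerSL ℂ (J (F n)) : H →ₗ[ℂ] ℂ) by
    rw [indef_conj hJ, show indef J (F n) x = 0 from hker, map_zero]
  refine topologicalClosure_minimal _ ?_ (ContinuousLinearMap.isClosed_ker _) hx
  rw [span_le]
  rintro _ ⟨m, hm, rfl⟩
  exact horth fun h => hn (h ▸ hm)

section Bessel

variable {B ε : ℝ} {N : Set ℕ}

theorem sum_norm_indef_sq_le_of_mem_span (hJ : IsFundSym J) (horth : IsJOrthogonal J F)
    (hε : |ε| = 1) (hN : ∀ n ∈ N, 0 ≤ ε * (indef J (F n) (F n)).re)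
    (hB : ∀ n, |(indef J (F n) (F n)).re| ≤ B) (S : Finset ℕ) {x : H}
    (hx : x ∈ span ℂ (F '' N)) :
    ∑ m ∈ S, ‖indef J x (F m)‖ ^ 2 ≤ B * (ε * (indef J x x).re) := by
  classical
  obtain ⟨l, hlN, rfl⟩ := (Finsupp.mem_span_image_iff_linearCombination ℂ).1 hx
  rw [Finsupp.linearCombination_apply, Finsupp.sum, re_indef_sum_smul_self horth, mul_sum,
    mul_sum]
  simp_rw [norm_indef_sum_smul_left_sq hJ horth]
  rw [sum_ite_mem]
  refine (sum_le_sum_of_subset_of_nonneg inter_subset_right fun _ _ _ => by positivity).trans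
    (sum_le_sum fun m hm => ?_)
  set r := (indef J (F m) (F m)).re
  have hεr : 0 ≤ ε * r := hN m ((Finsupp.mem_supported ℂ l).1 hlN hm)
  have hεrB : ε * r ≤ B := by
    rw [← abs_of_nonneg hεr, abs_mul, hε, one_mul]
    exact hB m
  calc ‖l m‖ ^ 2 * r ^ 2 = ‖l m‖ ^ 2 * ((ε * r) * (ε * r)) := by
        rw [← sq, mul_pow, ← sq_abs ε, hε, one_pow, one_mul]
    _ ≤ ‖l m‖ ^ 2 * (B * (ε * r)) := by gcongr
    _ = B * (ε * (‖l m‖ ^ 2 * r)) := by ring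

theorem sum_norm_indef_sq_le_of_mem_closure_span (hJ : IsFundSym J)
    (horth : IsJOrthogonal J F) (hε : |ε| = 1)
    (hN : ∀ n ∈ N, 0 ≤ ε * (indef J (F n) (F n)).re)
    (hB : ∀ n, |(indef J (F n) (F n)).re| ≤ B) (S : Finset ℕ) {x : H}
    (hx : x ∈ (span ℂ (F '' N)).topologicalClosure) :
    ∑ m ∈ S, ‖indef J x (F m)‖ ^ 2 ≤ B * (ε * (indef J x x).re) := by
  have hclosed : IsClosed {x : H | ∑ m ∈ S, ‖indef J x (F m)‖ ^ 2 ≤ B * (ε * (indef J x x).re)} :=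
    isClosed_le
      (continuous_finsetSum S fun m _ =>
        (continuous_indef J continuous_id continuous_const).norm.pow 2)
      (continuous_const.mul (continuous_const.mul
        (Complex.continuous_re.comp (continuous_indef J continuous_id continuous_id))))
  exact closure_minimal (fun y hy => sum_norm_indef_sq_le_of_mem_span hJ horth hε hN hB S hy)
    hclosed hx

end Bessel

section EnergySpace

variable {K : Type} [NormedAddCommGroup K] [InnerProductSpace ℂ K]
  {ι : ↥(Mpos J F ⊔ Mneg J F) →ₗ[ℂ] K} {P : ↥(Mpos J F ⊔ Mneg J F) →ₗ[ℂ] H}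

theorem norm_sq_eq_of_inner_eq
    (hι : ∀ x y : ↥(Mpos J F ⊔ Mneg J F),
      ⟪ι x, ι y⟫ = indef J (P x) (P y) - indef J ((x : H) - P x) ((y : H) - P y))
    (x : ↥(Mpos J F ⊔ Mneg J F)) :
    ‖ι x‖ ^ 2 = (indef J (P x) (P x)).re - (indef J ((x : H) - P x) ((x : H) - P x)).re := by
  rw [← inner_self_eq_norm_sq (𝕜 := ℂ), hι x x, map_sub]
  rfl

theorem sum_norm_indef_sq_le_mul_norm_sq (hJ : IsFundSym J) (horth : IsJOrthogonal J F) {B : ℝ}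
    (hB : ∀ n, |(indef J (F n) (F n)).re| ≤ B)
    (hP : ∀ x : ↥(Mpos J F ⊔ Mneg J F), P x ∈ Mpos J F ∧ (x : H) - P x ∈ Mneg J F)
    (hι : ∀ x y : ↥(Mpos J F ⊔ Mneg J F),
      ⟪ι x, ι y⟫ = indef J (P x) (P y) - indef J ((x : H) - P x) ((y : H) - P y))
    (S : Finset ℕ) (x : ↥(Mpos J F ⊔ Mneg J F)) :
    ∑ m ∈ S, ‖indef J x (F m)‖ ^ 2 ≤ B * ‖ι x‖ ^ 2 := by
  obtain ⟨hp, hq⟩ := hP x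
  set p := P x
  set q := (x : H) - p
  have hsplit : ∀ m, ‖indef J x (F m)‖ ^ 2 = ‖indef J p (F m)‖ ^ 2 + ‖indef J q (F m)‖ ^ 2 := by
    intro m
    have hpq : indef J x (F m) = indef J p (F m) + indef J q (F m) := by
      rw [indef, indef, indef, ← inner_add_left, ← map_add, add_sub_cancel]
    rcases le_or_gt 0 (indef J (F m) (F m)).re with hm | hm
    · rw [hpq, indef_eq_zero_of_mem_closure_span hJ horth (N := Nneg J F) hm.not_gt hq]
      simp
    · rw [hpq, indef_eq_zero_of_mem_closure_span hJ horth (N := Npos J F) hm.not_ge hp]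
      simp
  have hp' := sum_norm_indef_sq_le_of_mem_closure_span hJ horth (ε := 1) (by simp)
    (fun n hn => by rw [one_mul]; exact hn) hB S hp
  have hq' := sum_norm_indef_sq_le_of_mem_closure_span hJ horth (ε := -1) (by simp)
    (fun n hn => by simpa using hn.le) hB S hq
  rw [norm_sq_eq_of_inner_eq hι, sum_congr rfl fun m _ => hsplit m, sum_add_distrib]
  linarith

theorem norm_sq_eq_of_eq_sum_smul (horth : IsJOrthogonal J F) (hdis : Mpos J F ⊓ Mneg J F = ⊥)
    (hP : ∀ x : ↥(Mpos J F ⊔ Mneg J F), P x ∈ Mpos J F ∧ (x : H) - P x ∈ Mneg J F)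
    (hι : ∀ x y : ↥(Mpos J F ⊔ Mneg J F),
      ⟪ι x, ι y⟫ = indef J (P x) (P y) - indef J ((x : H) - P x) ((y : H) - P y))
    {x : ↥(Mpos J F ⊔ Mneg J F)} {T : Finset ℕ} {a : ℕ → ℂ}
    (hx : (x : H) = ∑ n ∈ T, a n • F n) :
    ‖ι x‖ ^ 2 = ∑ n ∈ T, ‖a n‖ ^ 2 * |(indef J (F n) (F n)).re| := by
  classical
  set Tpos := T.filter (· ∈ Npos J F)
  set Tneg := T.filter (· ∉ Npos J F)
  have hsplit : (x : H) = ∑ n ∈ Tpos, a n • F n + ∑ n ∈ Tneg, a n • F n := by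
    rw [hx, sum_filter_add_sum_filter_not]
  have hpos : ∑ n ∈ Tpos, a n • F n ∈ Mpos J F :=
    sum_mem fun n hn => smul_mem _ _ (mem_Mpos_of_mem_Npos (mem_filter.1 hn).2)
  have hneg : ∑ n ∈ Tneg, a n • F n ∈ Mneg J F :=
    sum_mem fun n hn =>
      smul_mem _ _ (mem_Mneg_of_mem_Nneg (notMem_Npos_iff.1 (mem_filter.1 hn).2))
  have hPx : P x = ∑ n ∈ Tpos, a n • F n :=
    eq_of_sub_mem_of_inf_eq_bot hdis (hP x).1 hpos (hP x).2 (by rwa [hsplit, add_sub_cancel_left])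
  rw [norm_sq_eq_of_inner_eq hι, hPx, hsplit, add_sub_cancel_left, re_indef_sum_smul_self horth,
    re_indef_sum_smul_self horth, ← sum_filter_add_sum_filter_not T (· ∈ Npos J F),
    sub_eq_add_neg, ← sum_neg_distrib]
  congr 1 <;> refine sum_congr rfl fun n hn => ?_
  · rw [abs_of_nonneg (mem_filter.1 hn).2]
  · rw [abs_of_neg (notMem_Npos_iff.1 (mem_filter.1 hn).2), mul_neg]

theorem exists_tendsto_of_summable [CompleteSpace K] (hJ : IsFundSym J)
    (horth : IsJOrthogonal J F) (hdis : Mpos J F ⊓ Mneg J F = ⊥)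
    (hP : ∀ x : ↥(Mpos J F ⊔ Mneg J F), P x ∈ Mpos J F ∧ (x : H) - P x ∈ Mneg J F)
    (hι : ∀ x y : ↥(Mpos J F ⊔ Mneg J F),
      ⟪ι x, ι y⟫ = indef J (P x) (P y) - indef J ((x : H) - P x) ((y : H) - P y))
    {A : ℝ} (hA : 0 < A) (hAF : ∀ n, A ≤ |(indef J (F n) (F n)).re|)
    {f : H} {c : ℕ → ℂ} (hc : Tendsto (fun N => ∑ n ∈ range N, c n • F n) atTop (𝓝 f))
    (hf : Summable fun n => ‖indef J f (F n)‖ ^ 2) :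
    ∃ (g : K) (d : ℕ → ↥(Mpos J F ⊔ Mneg J F)),
      Tendsto (fun k => (d k : H)) atTop (𝓝 f) ∧ Tendsto (fun k => ι (d k)) atTop (𝓝 g) := by
  let d : ℕ → ↥(Mpos J F ⊔ Mneg J F) :=
    fun k => ⟨∑ n ∈ range k, c n • F n, sum_smul_mem_Mpos_sup_Mneg _ _⟩
  have hcoef : ∀ n, ‖c n‖ ^ 2 * |(indef J (F n) (F n)).re| ≤ A⁻¹ * ‖indef J f (F n)‖ ^ 2 := by
    intro n
    rw [indef_eq_of_tendsto_sum horth hc, norm_mul, RCLike.norm_conj, norm_indef_self hJ,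
      le_inv_mul_iff₀ hA]
    set r := (indef J (F n) (F n)).re
    calc A * (‖c n‖ ^ 2 * |r|) ≤ |r| * (‖c n‖ ^ 2 * |r|) := by gcongr; exact hAF n
      _ = (‖c n‖ * |r|) ^ 2 := by ring
  have hcauchy : CauchySeq fun k => ι (d k) := by
    refine cauchySeq_of_dist_sq_le (C := A⁻¹) hf.hasSum.tendsto_sum_nat.cauchySeq
      fun j k hjk => ?_
    rw [dist_eq_norm, ← map_sub, norm_sq_eq_of_eq_sum_smul horth hdis hP hι (T := Ico j k)
      (a := c) (by simp [d, sum_Ico_eq_sub _ hjk]), ← sum_Ico_eq_sub _ hjk, mul_sum]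
    exact sum_le_sum fun n _ => hcoef n
  obtain ⟨g, hg⟩ := cauchySeq_tendsto_of_complete hcauchy
  exact ⟨g, d, hc, hg⟩

end EnergySpace

end

theorem stmt16_general {K : Type} [NormedAddCommGroup K] [InnerProductSpace ℂ K]
    [CompleteSpace K]
    (J : H →L[ℂ] H) (hJ : IsFundSym J)
    (F : ℕ → H) (A B : ℝ) (hF : IsJFrame J F A B)
    (horth : ∀ n m : ℕ, n ≠ m → indef J (F n) (F m) = 0)
    (hbasis : ∀ f : H, ∃! c : ℕ → ℂ,
      Tendsto (fun N : ℕ => ∑ n ∈ Finset.range N, c n • F n) atTop (nhds f))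
    (hdis : Mpos J F ⊓ Mneg J F = ⊥)
    (ι : ↥(Mpos J F ⊔ Mneg J F) →ₗ[ℂ] K)
    (P : ↥(Mpos J F ⊔ Mneg J F) →ₗ[ℂ] H)
    (hP : ∀ x : ↥(Mpos J F ⊔ Mneg J F), P x ∈ Mpos J F ∧ (x : H) - P x ∈ Mneg J F)
    (hι : ∀ x y : ↥(Mpos J F ⊔ Mneg J F),
      ⟪ι x, ι y⟫ = indef J (P x) (P y) - indef J ((x : H) - P x) ((y : H) - P y)) :
    ∀ f : H,
      (∃ (g : K) (d : ℕ → ↥(Mpos J F ⊔ Mneg J F)),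
        Tendsto (fun k => ((d k : H))) atTop (nhds f) ∧
        Tendsto (fun k => ι (d k)) atTop (nhds g)) ↔
      Summable (fun n : ℕ => ‖indef J f (F n)‖ ^ 2) := by
  intro f
  have hdiag := hF.abs_re_indef_self_mem_Icc hJ horth (ne_zero_of_existsUnique_expansion hbasis)
  constructor
  · rintro ⟨g, d, hdf, hdg⟩
    refine summable_of_sum_range_le (c := B * ‖g‖ ^ 2) (fun n => by positivity) fun N => ?_
    refine le_of_tendsto_of_tendsto' (tendsto_finsetSum _ fun m _ => ?_)
      ((hdg.norm.pow 2).const_mul B) fun k =>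
        sum_norm_indef_sq_le_mul_norm_sq hJ horth (fun n => (hdiag n).2) hP hι _ (d k)
    exact (((continuous_indef J continuous_id continuous_const).norm.pow 2).tendsto f).comp hdf
  · obtain ⟨c, hc, -⟩ := hbasis f
    exact exists_tendsto_of_summable hJ horth hdis hP hι hF.1 (fun n => (hdiag n).1) hc

/-- Proposition on `𝔇`: for a `J`-orthogonal Schauder basis `F`
which is a `J`-frame, an element `f ∈ H` lies in the energetic manifold
`𝔇 = H ∩ Ĥ` (i.e. `f` is approximated by a sequence from `D = M₊ ∔ M₋`
converging simultaneously in `H` and in the completion `Ĥ = K`) iff the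
sequence `{[f, fₙ]}` belongs to `l²(ℕ)`. -/
theorem stmt16 {K : Type} [NormedAddCommGroup K] [InnerProductSpace ℂ K]
    [CompleteSpace K]
    (J : H →L[ℂ] H) (hJ : IsFundSym J)
    (F : ℕ → H) (A B : ℝ) (hF : IsJFrame J F A B)
    (horth : ∀ n m : ℕ, n ≠ m → indef J (F n) (F m) = 0)
    (hbasis : ∀ f : H, ∃! c : ℕ → ℂ,
      Tendsto (fun N : ℕ => ∑ n ∈ Finset.range N, c n • F n) atTop (nhds f))
    (hdis : Mpos J F ⊓ Mneg J F = ⊥)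
    (ι : ↥(Mpos J F ⊔ Mneg J F) →ₗ[ℂ] K) (hdense : DenseRange ι)
    (P : ↥(Mpos J F ⊔ Mneg J F) →ₗ[ℂ] H)
    (hP : ∀ x : ↥(Mpos J F ⊔ Mneg J F), P x ∈ Mpos J F ∧ (x : H) - P x ∈ Mneg J F)
    (hι : ∀ x y : ↥(Mpos J F ⊔ Mneg J F),
      ⟪ι x, ι y⟫ = indef J (P x) (P y) - indef J ((x : H) - P x) ((y : H) - P y)) :
    ∀ f : H,
      (∃ (g : K) (d : ℕ → ↥(Mpos J F ⊔ Mneg J F)),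
        Tendsto (fun k => ((d k : H))) atTop (nhds f) ∧
        Tendsto (fun k => ι (d k)) atTop (nhds g)) ↔
      Summable (fun n : ℕ => ‖indef J f (F n)‖ ^ 2) :=
  stmt16_general J hJ F A B hF horth hbasis hdis ι P hP hι

end KreinStmt
end
end

section
/- Let H = L²(−a, a), J f(x) = f(−x), and [f,g] = ∫_{−a}^a f(−x) conj(g(x)) dx. Let Q be multiplication by x, and let {g_n} = {g_n⁺} ∪ {g_n⁻} where {g_n⁺} and {g_n⁻} are orthogonal bounded bases of the subspaces of even and odd functions, respectively. Then the sequence f_n(x) = e^{−x/2} g_n(x) is a J-orthogonal J-frame in the Krein space (L²(−a,a), [·,·]), with [f_n, f_m] = sgn[g_n,g_n] · ‖g_n‖² · δ_{nm}. -/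
noncomputable section
open Filter Topology

namespace KreinStmt

local notation "⟪" x ", " y "⟫" => @inner ℂ _ _ x y

variable {H : Type} [NormedAddCommGroup H] [InnerProductSpace ℂ H] [CompleteSpace H]

/-!
Multiplication by `e^{-x/2}` is a linear homeomorphism of `L²(-a,a)` that preserves the
indefinite product, because `e^{-(-x)/2} e^{-x/2} = 1`; so it carries `J`-frames to `J`-frames
and it is enough to look at `{gₙ}` itself. Its nonnegative vectors are the even `gₙ`, whose
closed span is the whole space of even functions, a maximal positive subspace (every function is
the sum of an even and an odd one). On even functions the indefinite product is the Hilbert one,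
so the frame bounds `c²`, `d²` follow from orthogonality. The odd `gₙ` are the even ones for the
fundamental symmetry `-J`.
-/

open MeasureTheory Submodule

section Orthogonal

variable {E ι : Type*} [NormedAddCommGroup E] [InnerProductSpace ℂ E] {G : ι → E}

lemma inner_linearCombination_of_orthogonal (hG : Pairwise fun n m => ⟪G n, G m⟫ = 0)
    (l : ι →₀ ℂ) (m : ι) :
    ⟪Finsupp.linearCombination ℂ G l, G m⟫ = starRingEnd ℂ (l m) * ((‖G m‖ ^ 2 : ℝ) : ℂ) := by
  classical
  rw [Finsupp.linearCombination_apply, Finsupp.sum, sum_inner, Finset.sum_eq_single m]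
  · rw [inner_smul_left, inner_self_eq_norm_sq_to_K]
    push_cast
    rfl
  · intro n _ hnm
    rw [inner_smul_left, hG hnm, mul_zero]
  · intro hm
    rw [Finsupp.notMem_support_iff.mp hm, zero_smul, inner_zero_left]

lemma norm_sq_linearCombination_of_orthogonal (hG : Pairwise fun n m => ⟪G n, G m⟫ = 0)
    (l : ι →₀ ℂ) :
    ‖Finsupp.linearCombination ℂ G l‖ ^ 2 = ∑ n ∈ l.support, ‖l n‖ ^ 2 * ‖G n‖ ^ 2 := by
  set g := Finsupp.linearCombination ℂ G l with hg
  have h : ⟪g, g⟫ = ((∑ n ∈ l.support, ‖l n‖ ^ 2 * ‖G n‖ ^ 2 : ℝ) : ℂ) := by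
    conv_lhs => arg 3; rw [hg, Finsupp.linearCombination_apply, Finsupp.sum]
    rw [inner_sum]
    push_cast
    refine Finset.sum_congr rfl fun n _ => ?_
    rw [inner_smul_right, inner_linearCombination_of_orthogonal hG, ← mul_assoc,
      Complex.mul_conj']
    push_cast
    ring
  rw [@norm_sq_eq_re_inner ℂ, h]
  exact Complex.ofReal_re _

lemma frame_bounds_of_orthogonal (hG : Pairwise fun n m => ⟪G n, G m⟫ = 0) {c d : ℝ}
    (hc : 0 ≤ c) (hbdd : ∀ n, c ≤ ‖G n‖ ∧ ‖G n‖ ≤ d) {S : Set ι} {g : E}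
    (hg : g ∈ span ℂ (G '' S)) :
    c ^ 2 * ‖g‖ ^ 2 ≤ ∑' n : S, ‖⟪g, G n⟫‖ ^ 2 ∧ ∑' n : S, ‖⟪g, G n⟫‖ ^ 2 ≤ d ^ 2 * ‖g‖ ^ 2 := by
  obtain ⟨l, hlS, rfl⟩ := Finsupp.mem_span_image_iff_linearCombination ℂ |>.mp hg
  have hterm (n : ι) : ‖⟪Finsupp.linearCombination ℂ G l, G n⟫‖ ^ 2 =
      ‖G n‖ ^ 2 * (‖l n‖ ^ 2 * ‖G n‖ ^ 2) := by
    rw [inner_linearCombination_of_orthogonal hG, norm_mul, RCLike.norm_conj, Complex.norm_real,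
      Real.norm_of_nonneg (by positivity)]
    ring
  have hsum : ∑' n : S, ‖⟪Finsupp.linearCombination ℂ G l, G n⟫‖ ^ 2 =
      ∑ n ∈ l.support, ‖G n‖ ^ 2 * (‖l n‖ ^ 2 * ‖G n‖ ^ 2) := by
    have hzero (n : ι) (hn : n ∉ l.support) : ‖G n‖ ^ 2 * (‖l n‖ ^ 2 * ‖G n‖ ^ 2) = 0 := by
      simp [Finsupp.notMem_support_iff.mp hn]
    rw [tsum_congr fun n : S => hterm n, tsum_subtype_eq_of_support_subset
      (f := fun n => ‖G n‖ ^ 2 * (‖l n‖ ^ 2 * ‖G n‖ ^ 2)), tsum_eq_sum hzero]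
    exact (Function.support_subset_iff'.mpr hzero).trans hlS
  rw [hsum, norm_sq_linearCombination_of_orthogonal hG, Finset.mul_sum, Finset.mul_sum]
  constructor <;>
    refine Finset.sum_le_sum fun n _ => mul_le_mul_of_nonneg_right ?_ (by positivity)
  · exact pow_le_pow_left₀ hc (hbdd n).1 2
  · exact pow_le_pow_left₀ (norm_nonneg _) (hbdd n).2 2

end Orthogonal

section Krein

variable {E : Type} [NormedAddCommGroup E] [InnerProductSpace ℂ E] {J : E →L[ℂ] E}

lemma indef_neg (J : E →L[ℂ] E) (f g : E) : indef (-J) f g = -indef J f g := by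
  simp [indef, inner_neg_left]

lemma isPos_neg_iff {M : Submodule ℂ E} : IsPos (-J) M ↔ IsNeg J M := by
  simp only [IsPos, IsNeg, indef_neg, Complex.neg_re, neg_pos]

lemma isMaxPos_neg_iff {M : Submodule ℂ E} : IsMaxPos (-J) M ↔ IsMaxNeg J M := by
  simp only [IsMaxPos, IsMaxNeg, isPos_neg_iff]

lemma indef_self_of_apply_eq {f : E} (hf : J f = f) : indef J f f = ((‖f‖ ^ 2 : ℝ) : ℂ) := by
  rw [indef, hf, inner_self_eq_norm_sq_to_K]
  push_cast
  rfl

lemma indef_self_of_apply_eq_neg {f : E} (hf : J f = -f) :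
    indef J f f = -((‖f‖ ^ 2 : ℝ) : ℂ) := by
  rw [← indef_self_of_apply_eq (J := -J) (by simp [hf]), indef_neg, neg_neg]

lemma indef_eq_zero_of_parity {f g : E} (hf : J f = f ∨ J f = -f) (hfg : ⟪f, g⟫ = 0) :
    indef J f g = 0 := by
  rcases hf with hf | hf <;> simp [indef, hf, inner_neg_left, hfg]

lemma indef_self_of_parity {f : E} (hf : J f = f ∨ J f = -f) (hf0 : f ≠ 0) :
    indef J f f = (((indef J f f).re.sign * ‖f‖ ^ 2 : ℝ) : ℂ) := by
  have hpos : 0 < ‖f‖ ^ 2 := by positivity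
  rcases hf with hf | hf
  · rw [indef_self_of_apply_eq hf, Complex.ofReal_re, Real.sign_of_pos hpos, one_mul]
  · rw [indef_self_of_apply_eq_neg hf, Complex.neg_re, Complex.ofReal_re,
      Real.sign_of_neg (neg_neg_of_pos hpos), neg_one_mul, Complex.ofReal_neg]

lemma re_indef_self_ne_zero_of_parity {f : E} (hf : J f = f ∨ J f = -f) (hf0 : f ≠ 0) :
    (indef J f f).re ≠ 0 := by
  have hpos : 0 < ‖f‖ ^ 2 := by positivity
  rcases hf with hf | hf
  · rw [indef_self_of_apply_eq hf, Complex.ofReal_re]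
    exact hpos.ne'
  · rw [indef_self_of_apply_eq_neg hf, Complex.neg_re, Complex.ofReal_re, neg_ne_zero]
    exact hpos.ne'

def fixedSubspace (J : E →L[ℂ] E) : Submodule ℂ E := LinearMap.eqLocus J LinearMap.id

lemma mem_fixedSubspace {f : E} : f ∈ fixedSubspace J ↔ J f = f := LinearMap.mem_eqLocus

lemma isClosed_fixedSubspace : IsClosed (fixedSubspace J : Set E) :=
  isClosed_eq J.continuous continuous_id

lemma isMaxPos_fixedSubspace (hJ : Function.Involutive J) : IsMaxPos J (fixedSubspace J) := by
  refine ⟨⟨isClosed_fixedSubspace, fun f hf hf0 => ?_⟩,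
    fun M hM hle => le_antisymm (fun f hf => ?_) hle⟩
  · rw [indef_self_of_apply_eq (mem_fixedSubspace.mp hf), Complex.ofReal_re]
    positivity
  -- the `J`-odd part `f - J f` of `f` lies in the positive subspace `M`, so it vanishes
  have heven : f + J f ∈ fixedSubspace J :=
    mem_fixedSubspace.mpr (by rw [map_add, hJ f, add_comm])
  have hodd : J (f - J f) = -(f - J f) := by rw [map_sub, hJ f, neg_sub]
  have hmem : f - J f ∈ M := by
    convert M.sub_mem (M.smul_mem (2 : ℂ) hf) (hle heven) using 1
    rw [two_smul]
    abel
  have hzero : f - J f = 0 := by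
    by_contra hne
    have := hM.2 _ hmem hne
    rw [indef_self_of_apply_eq_neg hodd, Complex.neg_re, Complex.ofReal_re] at this
    linarith [sq_nonneg ‖f - J f‖]
  exact mem_fixedSubspace.mpr (sub_eq_zero.mp hzero).symm

variable {G : ℕ → E}

lemma span_image_le_fixedSubspace :
    span ℂ (G '' {n | J (G n) = G n}) ≤ fixedSubspace J := by
  rw [span_le]
  rintro _ ⟨n, hn, rfl⟩
  exact mem_fixedSubspace.mpr hn

lemma topologicalClosure_span_image_eq_fixedSubspace
    (hpar : ∀ n, J (G n) = G n ∨ J (G n) = -G n) (hdense : Dense (span ℂ (Set.range G) : Set E)) :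
    (span ℂ (G '' {n | J (G n) = G n})).topologicalClosure = fixedSubspace J := by
  refine le_antisymm (topologicalClosure_minimal _ span_image_le_fixedSubspace
    isClosed_fixedSubspace) fun f hf => ?_
  -- `1 + J` maps the span of all `G n` into the span of the even ones, and `f` to `2 f`
  set P : E →L[ℂ] E := 1 + J
  have hP : span ℂ (Set.range G) ≤
      (span ℂ (G '' {n | J (G n) = G n})).comap (P : E →ₗ[ℂ] E) := by
    rw [span_le]
    rintro _ ⟨n, rfl⟩
    rw [SetLike.mem_coe, Submodule.mem_comap, ContinuousLinearMap.coe_coe]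
    rcases hpar n with h | h
    · have : P (G n) = (2 : ℂ) • G n := by simp [P, h, two_smul]
      exact this ▸ smul_mem _ _ (subset_span ⟨n, h, rfl⟩)
    · have : P (G n) = 0 := by simp [P, h]
      exact this ▸ zero_mem _
  have h2f : (2 : ℂ) • f ∈ (span ℂ (G '' {n | J (G n) = G n})).topologicalClosure := by
    have : P f = (2 : ℂ) • f := by simp [P, mem_fixedSubspace.mp hf, two_smul]
    exact this ▸ map_mem_closure P.continuous (hdense f) fun x hx => hP hx
  simpa using smul_mem _ (2 : ℂ)⁻¹ h2f

lemma Npos_eq_of_parity (hpar : ∀ n, J (G n) = G n ∨ J (G n) = -G n) (hG0 : ∀ n, G n ≠ 0) :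
    Npos J G = {n | J (G n) = G n} := by
  ext n
  rcases hpar n with h | h
  · simp only [Npos, Set.mem_ofPred_eq, indef_self_of_apply_eq h, Complex.ofReal_re, h,
      iff_true]
    positivity
  · have hne : J (G n) ≠ G n := fun h' => by
      have h2 : (2 : ℂ) • G n = 0 := by
        rw [two_smul]
        exact eq_neg_iff_add_eq_zero.mp (h'.symm.trans h)
      exact hG0 n ((smul_eq_zero.mp h2).resolve_left two_ne_zero)
    have := hG0 n
    simp only [Npos, Set.mem_ofPred_eq, indef_self_of_apply_eq_neg h, Complex.neg_re,
      Complex.ofReal_re, hne, iff_false, not_le, neg_neg_iff_pos]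
    positivity

/-- The conditions of `IsJFrame` on the nonnegative vectors; those on the negative vectors are
the same conditions for the fundamental symmetry `-J`. -/
def IsPosFrame (J : E →L[ℂ] E) (F : ℕ → E) (A B : ℝ) : Prop :=
  IsMaxPos J (Mpos J F) ∧
  ∀ f ∈ span ℂ (F '' Npos J F),
    A * |(indef J f f).re| ≤ ∑' n : Npos J F, ‖indef J f (F ↑n)‖ ^ 2 ∧
    ∑' n : Npos J F, ‖indef J f (F ↑n)‖ ^ 2 ≤ B * |(indef J f f).re|

lemma IsJFrame.of_isPosFrame {F : ℕ → E} {A B : ℝ} (hF : ∀ n, (indef J (F n) (F n)).re ≠ 0)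
    (hA : 0 < A) (hAB : A ≤ B) (hpos : IsPosFrame J F A B) (hneg : IsPosFrame (-J) F A B) :
    IsJFrame J F A B := by
  have hN : Npos (-J) F = Nneg J F := by
    ext n
    simp only [Npos, Nneg, Set.mem_ofPred_eq, indef_neg, Complex.neg_re, neg_nonneg]
    exact ⟨fun h => h.lt_of_ne (hF n), le_of_lt⟩
  obtain ⟨hmax, hbounds⟩ := hneg
  rw [Mpos, hN, ← Mneg, isMaxPos_neg_iff] at hmax
  rw [hN] at hbounds
  simp only [indef_neg, norm_neg, Complex.neg_re, abs_neg] at hbounds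
  exact ⟨hA, hAB, hpos.1, hmax, hpos.2, hbounds⟩

lemma isPosFrame_of_orthogonal (hJ : Function.Involutive J)
    (hpar : ∀ n, J (G n) = G n ∨ J (G n) = -G n) (horth : Pairwise fun n m => ⟪G n, G m⟫ = 0)
    {c d : ℝ} (hc : 0 < c) (hbdd : ∀ n, c ≤ ‖G n‖ ∧ ‖G n‖ ≤ d)
    (hdense : Dense (span ℂ (Set.range G) : Set E)) : IsPosFrame J G (c ^ 2) (d ^ 2) := by
  have hG0 (n : ℕ) : G n ≠ 0 := norm_pos_iff.mp (hc.trans_le (hbdd n).1)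
  rw [IsPosFrame, Mpos, Npos_eq_of_parity hpar hG0,
    topologicalClosure_span_image_eq_fixedSubspace hpar hdense]
  refine ⟨isMaxPos_fixedSubspace hJ, fun f hf => ?_⟩
  have hfix : J f = f := mem_fixedSubspace.mp (span_image_le_fixedSubspace hf)
  have hinner (g : E) : indef J f g = ⟪f, g⟫ := by rw [indef, hfix]
  rw [indef_self_of_apply_eq hfix, Complex.ofReal_re, abs_of_nonneg (by positivity)]
  simp only [hinner]
  exact frame_bounds_of_orthogonal horth hc.le hbdd hf

section Isometry

variable (e : E ≃L[ℂ] E) (he : ∀ u v, indef J (e u) (e v) = indef J u v)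
include he

lemma indef_symm_apply (u v : E) : indef J (e.symm u) (e.symm v) = indef J u v := by
  rw [← he, e.apply_symm_apply, e.apply_symm_apply]

lemma IsPos.map_equiv {M : Submodule ℂ E} (hM : IsPos J M) :
    IsPos J (M.map (e : E →ₗ[ℂ] E)) := by
  refine ⟨?_, ?_⟩
  · simpa only [map_coe, LinearEquiv.coe_coe, ContinuousLinearEquiv.coe_toLinearEquiv] using
      e.isClosed_image.mpr hM.1
  rintro _ ⟨g, hg, rfl⟩ hne
  rw [LinearEquiv.coe_coe, ContinuousLinearEquiv.coe_toLinearEquiv, he]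
  exact hM.2 g hg fun h => hne (by rw [h, map_zero])

lemma IsMaxPos.map_equiv {M : Submodule ℂ E} (hM : IsMaxPos J M) :
    IsMaxPos J (M.map (e : E →ₗ[ℂ] E)) := by
  refine ⟨hM.1.map_equiv e he, fun M' hM' hle => ?_⟩
  have hsymm := hM.2 (M'.map (e.symm : E →ₗ[ℂ] E))
    (hM'.map_equiv e.symm (indef_symm_apply e he))
    fun x hx => ⟨e x, hle ⟨x, hx, rfl⟩, e.symm_apply_apply x⟩
  exact ((map_symm_eq_iff e.toLinearEquiv).mp hsymm).symm

lemma Npos_map_equiv (F : ℕ → E) : Npos J (fun n => e (F n)) = Npos J F := by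
  simp only [Npos, he]

lemma IsPosFrame.map_equiv {F : ℕ → E} {A B : ℝ} (hF : IsPosFrame J F A B) :
    IsPosFrame J (fun n => e (F n)) A B := by
  have hspan (S : Set ℕ) :
      span ℂ ((fun n => e (F n)) '' S) = (span ℂ (F '' S)).map (e : E →ₗ[ℂ] E) := by
    rw [← Set.image_image e F, ← ContinuousLinearEquiv.coe_toLinearEquiv, ← LinearEquiv.coe_coe,
      span_image]
  have hMpos : Mpos J (fun n => e (F n)) = (Mpos J F).map (e : E →ₗ[ℂ] E) := by
    apply SetLike.coe_injective
    simp only [Mpos, Npos_map_equiv e he, hspan, topologicalClosure_coe, map_coe,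
      LinearEquiv.coe_coe, ContinuousLinearEquiv.coe_toLinearEquiv, e.image_closure]
  rw [IsPosFrame, hMpos, Npos_map_equiv e he, hspan]
  refine ⟨hF.1.map_equiv e he, ?_⟩
  rintro _ ⟨g, hg, rfl⟩
  simpa only [LinearEquiv.coe_coe, ContinuousLinearEquiv.coe_toLinearEquiv, he] using hF.2 g hg

end Isometry

end Krein

section ExpWeight

abbrev volIoo (a : ℝ) : Measure ℝ := volume.restrict (Set.Ioo (-a) a)

variable {a : ℝ}

lemma ae_eq_comp_neg {f g : ℝ → ℂ} (h : f =ᵐ[volIoo a] g) :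
    (fun x => f (-x)) =ᵐ[volIoo a] fun x => g (-x) := by
  have hneg : MeasurePreserving (fun x : ℝ => -x) (volIoo a) (volIoo a) := by
    simpa using (Measure.measurePreserving_neg volume).restrict_preimage
      (measurableSet_Ioo (a := -a) (b := a))
  exact hneg.quasiMeasurePreserving.ae_eq_comp h

lemma exp_neg_half_mul_exp_half (x : ℝ) : (Real.exp (-x / 2) : ℂ) * Real.exp (x / 2) = 1 := by
  rw [← Complex.ofReal_mul, ← Real.exp_add, neg_div, neg_add_cancel, Real.exp_zero,
    Complex.ofReal_one]

variable {Jr Em : Lp ℂ 2 (volIoo a) →L[ℂ] Lp ℂ 2 (volIoo a)}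

lemma indef_mul_exp_neg_half
    (hJr : ∀ f : Lp ℂ 2 (volIoo a), (Jr f : ℝ → ℂ) =ᵐ[volIoo a] fun x => f (-x))
    (hEm : ∀ f : Lp ℂ 2 (volIoo a),
      (Em f : ℝ → ℂ) =ᵐ[volIoo a] fun x => (Real.exp (-x / 2) : ℂ) * f x)
    (u v : Lp ℂ 2 (volIoo a)) : indef Jr (Em u) (Em v) = indef Jr u v := by
  simp only [indef, L2.inner_def]
  refine integral_congr_ae ?_
  filter_upwards [hJr (Em u), ae_eq_comp_neg (hEm u), hEm v, hJr u] with x h1 h2 h3 h4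
  simp only [RCLike.inner_apply, h1, h2, h3, h4, map_mul, Complex.conj_ofReal]
  linear_combination (starRingEnd ℂ (u (-x)) * v x) * exp_neg_half_mul_exp_half (-x)

lemma bijective_mul_exp_neg_half (hEm : ∀ f : Lp ℂ 2 (volIoo a),
      (Em f : ℝ → ℂ) =ᵐ[volIoo a] fun x => (Real.exp (-x / 2) : ℂ) * f x) :
    Function.Bijective Em := by
  refine ⟨fun u v huv => Lp.ext ?_, fun h => ?_⟩
  · filter_upwards [hEm u, hEm v] with x hu hv
    have : (Real.exp (-x / 2) : ℂ) * u x = Real.exp (-x / 2) * v x := by rw [← hu, ← hv, huv]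
    exact mul_left_cancel₀ (by exact_mod_cast (Real.exp_pos _).ne') this
  have hmem : MemLp (fun x => (Real.exp (x / 2) : ℂ) * h x) 2 (volIoo a) := by
    refine MemLp.of_le_mul (c := Real.exp (a / 2)) (Lp.memLp h) (by fun_prop) ?_
    filter_upwards [ae_restrict_mem measurableSet_Ioo] with x hx
    rw [norm_mul, Complex.norm_real, Real.norm_of_nonneg (Real.exp_pos _).le]
    gcongr
    linarith [hx.2]
  refine ⟨hmem.toLp _, Lp.ext ?_⟩
  filter_upwards [hEm (hmem.toLp _), hmem.coeFn_toLp] with x h1 h2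
  rw [h1, h2, ← mul_assoc, exp_neg_half_mul_exp_half, one_mul]

end ExpWeight

open MeasureTheory in
theorem stmt19_general (a : ℝ)
    (Jr : Lp ℂ 2 (volume.restrict (Set.Ioo (-a) a)) →L[ℂ]
          Lp ℂ 2 (volume.restrict (Set.Ioo (-a) a)))
    (hJr : ∀ f : Lp ℂ 2 (volume.restrict (Set.Ioo (-a) a)),
      (Jr f : ℝ → ℂ) =ᵐ[volume.restrict (Set.Ioo (-a) a)] fun x => f (-x))
    (hJfs : IsFundSym Jr)
    (Em : Lp ℂ 2 (volume.restrict (Set.Ioo (-a) a)) →L[ℂ]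
          Lp ℂ 2 (volume.restrict (Set.Ioo (-a) a)))
    (hEm : ∀ f : Lp ℂ 2 (volume.restrict (Set.Ioo (-a) a)),
      (Em f : ℝ → ℂ) =ᵐ[volume.restrict (Set.Ioo (-a) a)]
        fun x => (Real.exp (-x / 2) : ℂ) * f x)
    (G : ℕ → Lp ℂ 2 (volume.restrict (Set.Ioo (-a) a)))
    (hGparity : ∀ n : ℕ, Jr (G n) = G n ∨ Jr (G n) = -(G n))
    (hGorth : ∀ n m : ℕ, n ≠ m → ⟪G n, G m⟫ = 0)
    (c d : ℝ) (hc : 0 < c)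
    (hGbdd : ∀ n : ℕ, c ≤ ‖G n‖ ∧ ‖G n‖ ≤ d)
    (hGcomplete : Dense (↑(Submodule.span ℂ (Set.range G)) :
      Set (Lp ℂ 2 (volume.restrict (Set.Ioo (-a) a))))) :
    (∀ n m : ℕ, n ≠ m → indef Jr (Em (G n)) (Em (G m)) = 0) ∧
    (∀ n : ℕ, indef Jr (Em (G n)) (Em (G n)) =
      (((indef Jr (G n) (G n)).re.sign * ‖G n‖ ^ 2 : ℝ) : ℂ)) ∧
    ∃ A B : ℝ, IsJFrame Jr (fun n : ℕ => Em (G n)) A B := by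
  have hG0 (n : ℕ) : G n ≠ 0 := norm_pos_iff.mp (hc.trans_le (hGbdd n).1)
  have hEmJ := indef_mul_exp_neg_half hJr hEm
  have hEmJneg (u v) : indef (-Jr) (Em u) (Em v) = indef (-Jr) u v := by
    rw [indef_neg, indef_neg, hEmJ]
  have hparNeg (n : ℕ) : (-Jr) (G n) = G n ∨ (-Jr) (G n) = -G n := by
    rcases hGparity n with h | h <;> simp [h]
  have hinvNeg : Function.Involutive (-Jr) := fun f => by simp [hJfs.2 f]
  have hEmBij := bijective_mul_exp_neg_half hEm
  let e := ContinuousLinearEquiv.ofBijective Em (LinearMap.ker_eq_bot.mpr hEmBij.1)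
    (LinearMap.range_eq_top.mpr hEmBij.2)
  refine ⟨fun n m hnm => ?_, fun n => ?_, c ^ 2, d ^ 2,
    IsJFrame.of_isPosFrame (fun n => ?_) (by positivity)
      (pow_le_pow_left₀ hc.le ((hGbdd 0).1.trans (hGbdd 0).2) 2) ?_ ?_⟩
  · rw [hEmJ]
    exact indef_eq_zero_of_parity (hGparity n) (hGorth n m hnm)
  · rw [hEmJ]
    exact indef_self_of_parity (hGparity n) (hG0 n)
  · rw [hEmJ]
    exact re_indef_self_ne_zero_of_parity (hGparity n) (hG0 n)
  · exact (isPosFrame_of_orthogonal hJfs.2 hGparity hGorth hc hGbdd hGcomplete).map_equiv e hEmJ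
  · exact (isPosFrame_of_orthogonal hinvNeg hparNeg hGorth hc hGbdd hGcomplete).map_equiv e
      hEmJneg

open MeasureTheory in
/-- Example: in `H = L²(-a,a)` with `J f(x) = f(-x)` and
`[f,g] = ∫ f(-x) conj(g(x)) dx`, if `{gₙ}` is an orthogonal bounded basis of
`H` consisting of even and odd functions (`J gₙ = ±gₙ`), then
`fₙ(x) = e^{-x/2} gₙ(x)` is a `J`-orthogonal `J`-frame with
`[fₙ,fₘ] = sgn[gₙ,gₙ]·‖gₙ‖²·δₙₘ`. -/
theorem stmt19 (a : ℝ) (ha : 0 < a)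
    (Jr : Lp ℂ 2 (volume.restrict (Set.Ioo (-a) a)) →L[ℂ]
          Lp ℂ 2 (volume.restrict (Set.Ioo (-a) a)))
    (hJr : ∀ f : Lp ℂ 2 (volume.restrict (Set.Ioo (-a) a)),
      (Jr f : ℝ → ℂ) =ᵐ[volume.restrict (Set.Ioo (-a) a)] fun x => f (-x))
    (hJfs : IsFundSym Jr)
    (Em : Lp ℂ 2 (volume.restrict (Set.Ioo (-a) a)) →L[ℂ]
          Lp ℂ 2 (volume.restrict (Set.Ioo (-a) a)))
    (hEm : ∀ f : Lp ℂ 2 (volume.restrict (Set.Ioo (-a) a)),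
      (Em f : ℝ → ℂ) =ᵐ[volume.restrict (Set.Ioo (-a) a)]
        fun x => (Real.exp (-x / 2) : ℂ) * f x)
    (G : ℕ → Lp ℂ 2 (volume.restrict (Set.Ioo (-a) a)))
    (hGparity : ∀ n : ℕ, Jr (G n) = G n ∨ Jr (G n) = -(G n))
    (hGorth : ∀ n m : ℕ, n ≠ m → ⟪G n, G m⟫ = 0)
    (c d : ℝ) (hc : 0 < c)
    (hGbdd : ∀ n : ℕ, c ≤ ‖G n‖ ∧ ‖G n‖ ≤ d)
    (hGcomplete : Dense (↑(Submodule.span ℂ (Set.range G)) :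
      Set (Lp ℂ 2 (volume.restrict (Set.Ioo (-a) a))))) :
    (∀ n m : ℕ, n ≠ m → indef Jr (Em (G n)) (Em (G m)) = 0) ∧
    (∀ n : ℕ, indef Jr (Em (G n)) (Em (G n)) =
      (((indef Jr (G n) (G n)).re.sign * ‖G n‖ ^ 2 : ℝ) : ℂ)) ∧
    ∃ A B : ℝ, IsJFrame Jr (fun n : ℕ => Em (G n)) A B :=
  stmt19_general a Jr hJr hJfs Em hEm G hGparity hGorth c d hc hGbdd hGcomplete

end KreinStmt
end
end
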